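/- Under the assumptions of the attitude error kinematics (b ∈ S², Ṙ = R hat(Ω), Ṙ_d = hat(ω_d) R_d, r_d = R_d b, e_Ω = Ω − Rᵀω_d, e_r = (Rᵀ r_d) × b), the time derivative of e_r satisfies hat(ė_r) = hat(hat(b) hat(e_Ω) Rᵀ R_d b), and consequently ‖ė_r‖ ≤ ‖e_Ω‖. -/

import Mathlib

/-!
Write `u = Rᵀ R_d b`. The kinematic equations, together with the fact that a rotation commutes
with the cross product, give `u̇ = (Rᵀ ω_d - Ω) × u = -(e_Ω × u)`, hence
`ė_r = u̇ × b = b × (e_Ω × u)`. As `‖b‖ = ‖u‖ = 1` and `‖x × y‖ ≤ ‖x‖ ‖y‖` by Lagrange's identity,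
`‖ė_r‖ ≤ ‖e_Ω‖`.
-/

open Matrix

attribute [local instance] Matrix.normedAddCommGroup Matrix.normedSpace

/-- The hat map sending `x ∈ ℝ³` to the skew-symmetric matrix with `hat x * v = x ×₃ v`. -/
def hat (x : Fin 3 → ℝ) : Matrix (Fin 3) (Fin 3) ℝ :=
  !![0, -x 2, x 1; x 2, 0, -x 0; -x 1, x 0, 0]

/-- Euclidean norm on `ℝ³`. -/
noncomputable def enorm3 (v : Fin 3 → ℝ) : ℝ := Real.sqrt (v ⬝ᵥ v)

section Calculus

variable {𝕜 : Type*} [NontriviallyNormedField 𝕜] {t : 𝕜}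

theorem HasDerivAt.matrix_apply {m n : Type*} [Fintype m] [Fintype n]
    {A : 𝕜 → Matrix m n 𝕜} {A' : Matrix m n 𝕜} (hA : HasDerivAt A A' t) (i : m) (j : n) :
    HasDerivAt (fun s => A s i j) (A' i j) t :=
  hasDerivAt_pi.1 (hasDerivAt_pi.1 hA i) j

theorem HasDerivAt.matrix_transpose {m n : Type*} [Fintype m] [Fintype n]
    {A : 𝕜 → Matrix m n 𝕜} {A' : Matrix m n 𝕜} (hA : HasDerivAt A A' t) :
    HasDerivAt (fun s => (A s)ᵀ) A'ᵀ t :=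
  hasDerivAt_pi.2 fun i => hasDerivAt_pi.2 fun j => hA.matrix_apply j i

theorem HasDerivAt.matrix_mulVec {m n : Type*} [Fintype m] [Fintype n]
    {A : 𝕜 → Matrix m n 𝕜} {A' : Matrix m n 𝕜} {v : 𝕜 → n → 𝕜} {v' : n → 𝕜}
    (hA : HasDerivAt A A' t) (hv : HasDerivAt v v' t) :
    HasDerivAt (fun s => A s *ᵥ v s) (A' *ᵥ v t + A t *ᵥ v') t := by
  refine hasDerivAt_pi.2 fun i => ?_
  have h := HasDerivAt.fun_sum (u := Finset.univ) fun j _ =>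
    (hA.matrix_apply i j).fun_mul (hasDerivAt_pi.1 hv j)
  simpa only [mulVec, dotProduct, Pi.add_apply, Finset.sum_add_distrib] using h

theorem HasDerivAt.cross {u v : 𝕜 → Fin 3 → 𝕜} {u' v' : Fin 3 → 𝕜}
    (hu : HasDerivAt u u' t) (hv : HasDerivAt v v' t) :
    HasDerivAt (fun s => u s ⨯₃ v s) (u' ⨯₃ v t + u t ⨯₃ v') t := by
  have hu := hasDerivAt_pi.1 hu
  have hv := hasDerivAt_pi.1 hv
  have hcomponent : ∀ j k, HasDerivAt (fun s => u s j * v s k - u s k * v s j)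
      (u' j * v t k - u' k * v t j + (u t j * v' k - u t k * v' j)) t := fun j k =>
    (((hu j).fun_mul (hv k)).fun_sub ((hu k).fun_mul (hv j))).congr_deriv (by ring)
  refine hasDerivAt_pi.2 fun i => ?_
  fin_cases i
  exacts [hcomponent 1 2, hcomponent 2 0, hcomponent 0 1]

end Calculus

theorem hat_mulVec (x v : Fin 3 → ℝ) : hat x *ᵥ v = x ⨯₃ v := by
  ext i
  fin_cases i <;>
    simp only [hat, cross_apply, mulVec, dotProduct, Fin.sum_univ_three, of_apply, cons_val',
      cons_val_fin_one, cons_val_zero, cons_val_one, cons_val, Fin.zero_eta, Fin.mk_one,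
      Fin.reduceFinMk, Fin.isValue] <;> ring

theorem hat_transpose (x : Fin 3 → ℝ) : (hat x)ᵀ = -hat x := by
  ext i j
  fin_cases i <;> fin_cases j <;> simp [hat]

theorem mulVec_cross_mulVec {R : Type*} [CommRing R] (M : Matrix (Fin 3) (Fin 3) R)
    (x y : Fin 3 → R) : (M *ᵥ x) ⨯₃ (M *ᵥ y) = M.adjugateᵀ *ᵥ (x ⨯₃ y) := by
  ext i
  fin_cases i <;>
    simp only [cross_apply, mulVec, dotProduct, Fin.sum_univ_three, adjugate_fin_three,
      transpose_apply, of_apply, cons_val', cons_val_fin_one, cons_val_zero, cons_val_one,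
      cons_val, Fin.zero_eta, Fin.mk_one, Fin.reduceFinMk, Fin.isValue] <;> ring

theorem adjugate_eq_transpose_of_mul_transpose_eq_one {n R : Type*} [Fintype n] [DecidableEq n]
    [CommRing R] {M : Matrix n n R} (hM : M * Mᵀ = 1) (hdet : M.det = 1) : M.adjugate = Mᵀ :=
  calc M.adjugate = M.adjugate * M * Mᵀ := by rw [mul_assoc, hM, mul_one]
    _ = Mᵀ := by rw [adjugate_mul, hdet, one_smul, one_mul]

theorem mulVec_cross {R : Type*} [CommRing R] {M : Matrix (Fin 3) (Fin 3) R}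
    (hM : M * Mᵀ = 1) (hdet : M.det = 1) (x y : Fin 3 → R) :
    M *ᵥ (x ⨯₃ y) = (M *ᵥ x) ⨯₃ (M *ᵥ y) := by
  rw [mulVec_cross_mulVec, adjugate_eq_transpose_of_mul_transpose_eq_one hM hdet,
    transpose_transpose]

theorem hasDerivAt_transpose_mulVec_mulVec {R Rd : ℝ → Matrix (Fin 3) (Fin 3) ℝ}
    {Ω ωd : Fin 3 → ℝ} {t : ℝ} (hRt : (R t)ᵀ * R t = 1) (hdet : (R t).det = 1)
    (hR : HasDerivAt R (R t * hat Ω) t) (hRd : HasDerivAt Rd (hat ωd * Rd t) t)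
    (b : Fin 3 → ℝ) :
    HasDerivAt (fun s => (R s)ᵀ *ᵥ (Rd s *ᵥ b))
      (((R t)ᵀ *ᵥ ωd - Ω) ⨯₃ ((R t)ᵀ *ᵥ (Rd t *ᵥ b))) t := by
  convert hR.matrix_transpose.matrix_mulVec (hRd.matrix_mulVec (hasDerivAt_const t b)) using 1
  rw [mulVec_zero, add_zero, transpose_mul, hat_transpose, neg_mul, neg_mulVec,
    ← mulVec_mulVec, ← mulVec_mulVec, hat_mulVec, hat_mulVec,
    mulVec_cross (by rwa [transpose_transpose]) (by rwa [det_transpose]), LinearMap.map_sub₂]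
  abel

theorem enorm3_mulVec {M : Matrix (Fin 3) (Fin 3) ℝ} (hM : Mᵀ * M = 1) (v : Fin 3 → ℝ) :
    enorm3 (M *ᵥ v) = enorm3 v := by
  rw [enorm3, enorm3, dotProduct_mulVec, ← mulVec_transpose, mulVec_mulVec, hM, one_mulVec]

theorem enorm3_cross_le (x y : Fin 3 → ℝ) : enorm3 (x ⨯₃ y) ≤ enorm3 x * enorm3 y := by
  rw [enorm3, enorm3, enorm3, ← Real.sqrt_mul (by simpa using dotProduct_self_star_nonneg x)]
  refine Real.sqrt_le_sqrt ?_
  rw [cross_dot_cross, dotProduct_comm y x]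
  nlinarith [mul_self_nonneg (x ⬝ᵥ y)]

theorem deriv_error_vector_bound
    (b : Fin 3 → ℝ) (hb : enorm3 b = 1)
    (R Rd : ℝ → Matrix (Fin 3) (Fin 3) ℝ) (Ω ωd : ℝ → Fin 3 → ℝ)
    (hSO : ∀ t, (R t)ᵀ * R t = 1 ∧ (R t).det = 1)
    (hSOd : ∀ t, (Rd t)ᵀ * Rd t = 1 ∧ (Rd t).det = 1)
    (hR : ∀ t, HasDerivAt R (R t * hat (Ω t)) t)
    (hRd : ∀ t, HasDerivAt Rd (hat (ωd t) * Rd t) t)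
    -- the angular velocity error and the configuration error vector
    (eΩ : ℝ → Fin 3 → ℝ) (heΩ : ∀ t, eΩ t = Ω t - (R t)ᵀ.mulVec (ωd t))
    (er : ℝ → Fin 3 → ℝ)
    (her : ∀ t, er t = ((R t)ᵀ.mulVec ((Rd t).mulVec b)) ⨯₃ b)
    (t : ℝ) (er' : Fin 3 → ℝ) (hder : HasDerivAt er er' t) :
    hat er' = hat ((hat b * hat (eΩ t) * (R t)ᵀ * Rd t).mulVec b) ∧
    enorm3 er' ≤ enorm3 (eΩ t) := by
  obtain ⟨hRt, hdetR⟩ := hSO t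
  set u := (R t)ᵀ *ᵥ (Rd t *ᵥ b)
  have hu : enorm3 u = 1 := by
    rw [enorm3_mulVec (by rw [transpose_transpose]; exact mul_eq_one_comm.mp hRt),
      enorm3_mulVec (hSOd t).1, hb]
  have her' : er' = b ⨯₃ (eΩ t ⨯₃ u) := by
    have h := (hasDerivAt_transpose_mulVec_mulVec hRt hdetR (hR t) (hRd t) b).cross
      (hasDerivAt_const t b)
    rw [funext her] at hder
    rw [hder.unique h, map_zero, add_zero, ← cross_anticomm, ← map_neg, ← LinearMap.neg_apply,
      ← map_neg, neg_sub, heΩ]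
  refine ⟨?_, ?_⟩
  · simp only [her', ← mulVec_mulVec, hat_mulVec, u]
  · calc enorm3 er' ≤ enorm3 b * enorm3 (eΩ t ⨯₃ u) := her' ▸ enorm3_cross_le _ _
      _ ≤ enorm3 (eΩ t) * enorm3 u := by rw [hb, one_mul]; exact enorm3_cross_le _ _
      _ = enorm3 (eΩ t) := by rw [hu, mul_one]
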